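/- Let n ≥ 1 and let i ∈ {1,…,n}. For every integer j ≥ 0 and every μ ∈ ℤ^{n+1}, the unrestricted one-dimensional sum of the level-1 perfect crystal of type A_n^{(1)} satisfies the two-term Weyl-reflection identity g_j(i−1, μ) + g_j(i, μ + e_{i−1} − e_i) = g_j(i−1, s_i·μ − e_{i−1} + e_i) + g_j(i, s_i·μ), where s_i·μ denotes the vector obtained from μ by interchanging the entries μ_{i−1} and μ_i. (This is the case m = 1 of the Weyl-reflection identity, for a classical index i and the element b = i−1 with φ_i(b) = 1, f_i(b) = i.) -/

import Mathlib

/-!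
Peeling off the last letter of a path gives the recursion
`g_{j+1}(c, μ) = ∑_k q^{(j+1) H(c,k)} g_j(k, μ - e_k)`. For adjacent letters `a` and `b = a + 1`
and `s = (a b)`, one proves by simultaneous induction on `j` that `g_j(c, ·)` is `s`-invariant
for `c ≠ a` and that the two-term identity holds. Since `H(c,a) = H(c,b)` for `c ≠ a` and
`H(a,k) = H(b,k)` for `k ≠ b`, the terms of the recursion with `k ∉ {a, b}` are matched by
invariance, and the four remaining terms by the two-term identity at `j` applied to `μ - e_a`
and `μ - e_b`.
-/

open Finset

noncomputable section

/-- The indeterminate `q`, living in the field of rational functions `ℚ(q)`. -/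
def q : RatFunc ℚ := RatFunc.X

/-- Energy function of the level-1 perfect crystal `B = {0,…,n}` of type `A_n^{(1)}`. -/
def H (n : ℕ) (b b' : Fin (n + 1)) : ℤ := if b' ≤ b then 1 else 0

/-- The unrestricted one-dimensional sum `g_j(b,μ)`. -/
def g (n j : ℕ) (b : Fin (n + 1)) (μ : Fin (n + 1) → ℤ) : RatFunc ℚ :=
  ∑ p ∈ Finset.univ.filter (fun p : Fin (j + 1) → Fin (n + 1) =>
      p (Fin.last j) = b ∧
      ∀ k, ((Finset.univ.filter (fun i : Fin j => p i.castSucc = k)).card : ℤ) = μ k),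
    q ^ (∑ i : Fin j, ((i : ℤ) + 1) * H n (p i.succ) (p i.castSucc))

/-- The standard basis vector `e_b` of `ℤ^{n+1}`. -/
def e (n : ℕ) (b : Fin (n + 1)) : Fin (n + 1) → ℤ := fun k => if k = b then 1 else 0

lemma q_ne_zero : q ≠ 0 := RatFunc.X_ne_zero

section Recursion

variable {n j : ℕ}

def content (w : Fin j → Fin (n + 1)) : Fin (n + 1) → ℤ := fun k => #{i | w i = k}

def energy (p : Fin (j + 1) → Fin (n + 1)) : ℤ :=
  ∑ i : Fin j, ((i : ℤ) + 1) * H n (p i.succ) (p i.castSucc)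

lemma g_eq_sum_words (b : Fin (n + 1)) (μ : Fin (n + 1) → ℤ) :
    g n j b μ = ∑ w : Fin j → Fin (n + 1),
      if content w = μ then q ^ energy (Fin.snoc w b : Fin (j + 1) → Fin (n + 1)) else 0 := by
  rw [g, sum_filter, ← (Fin.snocEquiv fun _ => Fin (n + 1)).sum_comp, Fintype.sum_prod_type,
    Fintype.sum_eq_single b fun c hc => by simp [hc]]
  simp [content, energy, funext_iff]

lemma content_snoc (w : Fin j → Fin (n + 1)) (k : Fin (n + 1)) :
    content (Fin.snoc w k : Fin (j + 1) → Fin (n + 1)) = content w + e n k := by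
  ext m
  simp only [content, Pi.add_apply, e, card_filter, Fin.sum_univ_castSucc, Fin.snoc_castSucc,
    Fin.snoc_last]
  push_cast
  simp [eq_comm]

lemma energy_snoc (p : Fin (j + 1) → Fin (n + 1)) (c : Fin (n + 1)) :
    energy (Fin.snoc p c : Fin (j + 2) → Fin (n + 1)) =
      energy p + ((j : ℤ) + 1) * H n c (p (Fin.last j)) := by
  simp only [energy, Fin.sum_univ_castSucc, Fin.succ_castSucc, Fin.snoc_castSucc, Fin.succ_last,
    Fin.snoc_last, Fin.val_castSucc, Fin.val_last]

lemma g_succ (c : Fin (n + 1)) (μ : Fin (n + 1) → ℤ) :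
    g n (j + 1) c μ =
      ∑ k, q ^ (((j : ℤ) + 1) * H n c k) * g n j k (μ - e n k) := by
  simp_rw [g_eq_sum_words, mul_sum]
  rw [← (Fin.snocEquiv fun _ => Fin (n + 1)).sum_comp, Fintype.sum_prod_type]
  refine sum_congr rfl fun k _ => sum_congr rfl fun w _ => ?_
  simp only [Fin.snocEquiv, Equiv.coe_fn_mk, content_snoc, energy_snoc, Fin.snoc_last,
    eq_sub_iff_add_eq]
  split_ifs
  · exact (zpow_add₀ q_ne_zero _ _).trans (mul_comm _ _)
  · rw [mul_zero]

lemma g_zero (c : Fin (n + 1)) (μ : Fin (n + 1) → ℤ) :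
    g n 0 c μ = if μ = 0 then 1 else 0 := by
  simp [g_eq_sum_words, content, energy, funext_iff, eq_comm]

end Recursion

lemma e_comp_swap {n : ℕ} (a b k : Fin (n + 1)) :
    e n k ∘ Equiv.swap a b = e n (Equiv.swap a b k) := by
  have h : ∀ m, e n m = Pi.single m 1 := fun m => by ext; simp [e, Pi.single_apply]
  rw [h, h, Pi.single_comp_equiv, Equiv.symm_swap]

lemma g_zero_comp_equiv {n : ℕ} (σ : Fin (n + 1) ≃ Fin (n + 1)) (c : Fin (n + 1))
    (μ : Fin (n + 1) → ℤ) : g n 0 c (μ ∘ σ) = g n 0 c μ := by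
  have h : μ ∘ σ = 0 ↔ μ = 0 := σ.surjective.injective_comp_right.eq_iff' rfl
  simp only [g_zero, h]

section Reflection

variable {n : ℕ} {a b : Fin (n + 1)}

lemma H_right_eq_of_ne (hab : (b : ℕ) = a + 1) {c : Fin (n + 1)} (hc : c ≠ a) :
    H n c a = H n c b := by
  have := Fin.val_ne_of_ne hc
  simp only [H, Fin.le_def, hab]
  split_ifs <;> omega

lemma H_left_eq_of_ne (hab : (b : ℕ) = a + 1) {k : Fin (n + 1)} (hk : k ≠ b) :
    H n a k = H n b k := by
  have := Fin.val_ne_of_ne hk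
  simp only [H, Fin.le_def, hab]
  split_ifs <;> omega

lemma H_eq_one_of_le {c k : Fin (n + 1)} (h : k ≤ c) : H n c k = 1 := if_pos h

lemma H_eq_zero_of_lt {c k : Fin (n + 1)} (h : c < k) : H n c k = 0 := if_neg h.not_ge

lemma sum_compl_pair_H_left_eq (hab : (b : ℕ) = a + 1) (t : ℤ) (f : Fin (n + 1) → RatFunc ℚ) :
    ∑ k ∈ {a, b}ᶜ, q ^ (t * H n b k) * f k = ∑ k ∈ {a, b}ᶜ, q ^ (t * H n a k) * f k :=
  sum_congr rfl fun k hk => by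
    rw [H_left_eq_of_ne hab (by simp_all : k ≠ b)]

lemma g_succ_eq_pair_add_sum_compl (hab : a ≠ b) (j : ℕ) (c : Fin (n + 1))
    (μ : Fin (n + 1) → ℤ) :
    g n (j + 1) c μ =
      q ^ (((j : ℤ) + 1) * H n c a) * g n j a (μ - e n a) +
      q ^ (((j : ℤ) + 1) * H n c b) * g n j b (μ - e n b) +
      ∑ k ∈ {a, b}ᶜ, q ^ (((j : ℤ) + 1) * H n c k) * g n j k (μ - e n k) := by
  rw [g_succ, ← sum_add_sum_compl {a, b}, sum_pair hab]

lemma comp_swap_sub_add_e (μ : Fin (n + 1) → ℤ) :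
    μ ∘ Equiv.swap a b - e n a + e n b = (μ + e n a - e n b) ∘ Equiv.swap a b := by
  simp only [Pi.sub_comp, Pi.add_comp, e_comp_swap, Equiv.swap_apply_left, Equiv.swap_apply_right]
  abel

variable (n a b)

def ReflectionInvariant (j : ℕ) : Prop :=
  ∀ c ≠ a, ∀ μ, g n j c (μ ∘ Equiv.swap a b) = g n j c μ

def ReflectionIdentity (j : ℕ) : Prop :=
  ∀ μ, g n j a μ + g n j b (μ + e n a - e n b) =
    g n j a ((μ + e n a - e n b) ∘ Equiv.swap a b) + g n j b (μ ∘ Equiv.swap a b)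

variable {n a b}

lemma reflectionInvariant_zero : ReflectionInvariant n a b 0 :=
  fun c _ μ => g_zero_comp_equiv _ c μ

lemma reflectionIdentity_zero : ReflectionIdentity n a b 0 := by
  intro μ
  rw [g_zero_comp_equiv, g_zero_comp_equiv, g_zero, g_zero, g_zero, g_zero, add_comm]

lemma ReflectionInvariant.sum_compl {j : ℕ} (h : ReflectionInvariant n a b j)
    (f : Fin (n + 1) → RatFunc ℚ) (μ : Fin (n + 1) → ℤ) :
    ∑ k ∈ {a, b}ᶜ, f k * g n j k (μ ∘ Equiv.swap a b - e n k) =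
      ∑ k ∈ {a, b}ᶜ, f k * g n j k (μ - e n k) := by
  refine sum_congr rfl fun k hk => ?_
  have hk : k ≠ a ∧ k ≠ b := by simpa [not_or] using hk
  rw [← h k hk.1 (μ - e n k), Pi.sub_comp, e_comp_swap, Equiv.swap_apply_of_ne_of_ne hk.1 hk.2]

variable {j : ℕ}

lemma ReflectionInvariant.succ (hab : (b : ℕ) = a + 1) (hinv : ReflectionInvariant n a b j)
    (hid : ReflectionIdentity n a b j) : ReflectionInvariant n a b (j + 1) := by
  intro c hc μ
  have hne : a ≠ b := fun h => by simp [h] at hab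
  rw [g_succ_eq_pair_add_sum_compl hne, g_succ_eq_pair_add_sum_compl hne, hinv.sum_compl,
    ← H_right_eq_of_ne hab hc]
  have h := hid (μ - e n a)
  simp only [sub_add_cancel, Pi.sub_comp, e_comp_swap, Equiv.swap_apply_left,
    Equiv.swap_apply_right] at h
  linear_combination (-q ^ (((j : ℤ) + 1) * H n c a)) * h

lemma ReflectionIdentity.succ (hab : (b : ℕ) = a + 1) (hinv : ReflectionInvariant n a b j)
    (hid : ReflectionIdentity n a b j) : ReflectionIdentity n a b (j + 1) := by
  intro μ
  have hlt : a < b := by rw [Fin.lt_def]; omega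
  have hne := hlt.ne
  simp only [g_succ_eq_pair_add_sum_compl hne, sum_compl_pair_H_left_eq hab, hinv.sum_compl,
    H_eq_one_of_le le_rfl, H_eq_one_of_le hlt.le, H_eq_zero_of_lt hlt, mul_one, mul_zero,
    zpow_zero, one_mul]
  have h1 := hid (μ - e n b)
  have h2 := hid (μ - e n a)
  have h3 := hinv b hne.symm (μ - e n b)
  simp only [Pi.add_comp, Pi.sub_comp, e_comp_swap, Equiv.swap_apply_left,
    Equiv.swap_apply_right] at h1 h2 h3 ⊢
  generalize q ^ ((j : ℤ) + 1) = t
  -- normalizes the weight arguments of `g` too, so that equal `g`-values become equal atoms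
  ring_nf at h1 h2 h3 ⊢
  linear_combination t * (h1 + h2) + (t - 1) * h3

theorem reflectionInvariant_and_identity (hab : (b : ℕ) = a + 1) :
    ∀ j, ReflectionInvariant n a b j ∧ ReflectionIdentity n a b j
  | 0 => ⟨reflectionInvariant_zero, reflectionIdentity_zero⟩
  | j + 1 =>
    let ⟨hinv, hid⟩ := reflectionInvariant_and_identity hab j
    ⟨hinv.succ hab hid, hid.succ hab hinv⟩

end Reflection

/-- the `m = 1` case of the Weyl-reflection identity for a classical index
`i ∈ {1,…,n}` and the element `b = i-1` (with `φ_i(b) = 1`, `f_i(b) = i`):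
`g_j(i-1,μ) + g_j(i, μ+e_{i-1}-e_i) = g_j(i-1, s_i·μ-e_{i-1}+e_i) + g_j(i, s_i·μ)`,
where `s_i` interchanges the entries `μ_{i-1}` and `μ_i`. -/
theorem statement8 (n : ℕ) (i : ℕ) (hi1 : 1 ≤ i) (hin : i ≤ n)
    (j : ℕ) (μ : Fin (n + 1) → ℤ) :
    g n j ⟨i - 1, by omega⟩ μ +
      g n j ⟨i, by omega⟩ (μ + e n ⟨i - 1, by omega⟩ - e n ⟨i, by omega⟩) =
    g n j ⟨i - 1, by omega⟩
      ((fun k : Fin (n + 1) => if (k : ℕ) = i - 1 then μ ⟨i, by omega⟩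
        else if (k : ℕ) = i then μ ⟨i - 1, by omega⟩ else μ k)
        - e n ⟨i - 1, by omega⟩ + e n ⟨i, by omega⟩) +
    g n j ⟨i, by omega⟩
      (fun k : Fin (n + 1) => if (k : ℕ) = i - 1 then μ ⟨i, by omega⟩
        else if (k : ℕ) = i then μ ⟨i - 1, by omega⟩ else μ k) := by
  set a : Fin (n + 1) := ⟨i - 1, by omega⟩
  set b : Fin (n + 1) := ⟨i, by omega⟩
  have hab : (b : ℕ) = a + 1 := by simp only [a, b]; omega
  have hswap : (fun k : Fin (n + 1) => if (k : ℕ) = i - 1 then μ b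
      else if (k : ℕ) = i then μ a else μ k) = μ ∘ Equiv.swap a b := by
    ext k
    simp only [Function.comp_apply, Equiv.swap_apply_def, Fin.ext_iff, a, b]
    split_ifs <;> rfl
  rw [hswap, comp_swap_sub_add_e]
  exact (reflectionInvariant_and_identity hab j).2 μ

end
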